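/- In an orthomodular lattice, two elements a and b commute (a = (a ∧ b) ∨ (a ∧ b')) if and only if there exists an element c such that a +_l c = b, where x +_l y := (x ∨ (x' ∧ y)) ∧ (x' ∨ y'). -/

import Mathlib

/-- An orthomodular lattice: a bounded lattice with an orthocomplementation
satisfying the orthomodular law. -/
class OML (α : Type*) extends Lattice α, BoundedOrder α, Compl α where
  inf_compl : ∀ x : α, x ⊓ xᶜ = ⊥
  sup_compl : ∀ x : α, x ⊔ xᶜ = ⊤
  compl_compl : ∀ x : α, xᶜᶜ = x
  compl_antitone : ∀ x y : α, x ≤ y → yᶜ ≤ xᶜ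
  orthomodular : ∀ x y : α, x ≤ y → y = x ⊔ (y ⊓ xᶜ)

def pl {α : Type*} [OML α] (x y : α) : α := (x ⊔ (xᶜ ⊓ y)) ⊓ (xᶜ ⊔ yᶜ)

section Helpers

variable {α : Type*} [OML α]

lemma cc' (x : α) : xᶜᶜ = x := OML.compl_compl x

lemma lc' {x y : α} (h : x ≤ yᶜ) : y ≤ xᶜ := by
  have := OML.compl_antitone _ _ h
  rwa [cc'] at this

lemma dm_sup' (x y : α) : (x ⊔ y)ᶜ = xᶜ ⊓ yᶜ := by
  apply le_antisymm
  · exact le_inf (OML.compl_antitone _ _ le_sup_left) (OML.compl_antitone _ _ le_sup_right)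
  · apply lc'
    exact sup_le (lc' inf_le_left) (lc' inf_le_right)

lemma dm_inf' (x y : α) : (x ⊓ y)ᶜ = xᶜ ⊔ yᶜ := by
  have h := dm_sup' xᶜ yᶜ
  rw [cc', cc'] at h
  rw [← h, cc']

lemma Csymm {a b : α} (h : a = (a ⊓ b) ⊔ (a ⊓ bᶜ)) : b = (b ⊓ a) ⊔ (b ⊓ aᶜ) := by
  have hom := OML.orthomodular (a ⊓ b) b inf_le_right
  have h1 : b ⊓ (a ⊓ b)ᶜ ≤ aᶜ := by
    apply lc'
    rw [dm_inf', cc']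
    calc a = (a ⊓ b) ⊔ (a ⊓ bᶜ) := h
      _ ≤ bᶜ ⊔ (a ⊓ b) := sup_le le_sup_right (inf_le_right.trans le_sup_left)
  apply le_antisymm
  · calc b = (a ⊓ b) ⊔ (b ⊓ (a ⊓ b)ᶜ) := hom
      _ ≤ (b ⊓ a) ⊔ (b ⊓ aᶜ) :=
        sup_le (le_sup_left.trans' (le_inf inf_le_right inf_le_left))
          (le_sup_right.trans' (le_inf inf_le_left h1))
  · exact sup_le inf_le_left inf_le_left

end Helpers

theorem stmt_14 {α : Type*} [OML α] (a b : α) :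
    a = (a ⊓ b) ⊔ (a ⊓ bᶜ) ↔ ∃ c : α, pl a c = b := by
  constructor
  · intro h
    have hba : b = (b ⊓ a) ⊔ (b ⊓ aᶜ) := Csymm h
    have haC : a = (a ⊓ bᶜ) ⊔ (a ⊓ bᶜᶜ) := by
      rw [cc', sup_comm]; exact h
    have hbca : bᶜ = (bᶜ ⊓ a) ⊔ (bᶜ ⊓ aᶜ) := Csymm haC
    refine ⟨(a ⊓ bᶜ) ⊔ (aᶜ ⊓ b), ?_⟩
    have hcc : ((a ⊓ bᶜ) ⊔ (aᶜ ⊓ b))ᶜ = (aᶜ ⊔ b) ⊓ (a ⊔ bᶜ) := by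
      rw [dm_sup', dm_inf', dm_inf', cc', cc']
    unfold pl
    apply le_antisymm
    · -- pl a c ≤ b, via bᶜ ≤ (pl a c)ᶜ
      conv_rhs => rw [← cc' b]
      apply lc'
      rw [dm_inf', dm_sup', dm_inf', cc', dm_sup' aᶜ, cc', cc']
      calc bᶜ = (bᶜ ⊓ a) ⊔ (bᶜ ⊓ aᶜ) := hbca
        _ ≤ (aᶜ ⊓ (a ⊔ ((a ⊓ bᶜ) ⊔ (aᶜ ⊓ b))ᶜ)) ⊔ (a ⊓ ((a ⊓ bᶜ) ⊔ (aᶜ ⊓ b))) := by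
          apply sup_le
          · exact (le_inf inf_le_right
              ((le_inf inf_le_right inf_le_left).trans le_sup_left)).trans le_sup_right
          · refine le_sup_left.trans' (le_inf inf_le_right (le_sup_right.trans' ?_))
            rw [hcc]
            exact le_inf (inf_le_right.trans le_sup_left) (inf_le_left.trans le_sup_right)
    · apply le_inf
      · calc b = (b ⊓ a) ⊔ (b ⊓ aᶜ) := hba
          _ ≤ a ⊔ (aᶜ ⊓ ((a ⊓ bᶜ) ⊔ (aᶜ ⊓ b))) := by
            apply sup_le
            · exact inf_le_right.trans le_sup_left
            · exact le_sup_right.trans'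
                (le_inf inf_le_right ((le_inf inf_le_right inf_le_left).trans le_sup_right))
      · rw [hcc]
        calc b = (b ⊓ a) ⊔ (b ⊓ aᶜ) := hba
          _ ≤ aᶜ ⊔ ((aᶜ ⊔ b) ⊓ (a ⊔ bᶜ)) := by
            apply sup_le
            · exact le_sup_right.trans'
                (le_inf (inf_le_left.trans le_sup_right) (inf_le_right.trans le_sup_left))
            · exact inf_le_right.trans le_sup_left
  · rintro ⟨c, rfl⟩
    have hom := OML.orthomodular (a ⊓ c) a inf_le_left
    apply le_antisymm
    · calc a = (a ⊓ c) ⊔ (a ⊓ (a ⊓ c)ᶜ) := hom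
        _ ≤ (a ⊓ pl a c) ⊔ (a ⊓ (pl a c)ᶜ) := by
          apply sup_le
          · -- a ⊓ c ≤ a ⊓ (pl a c)ᶜ
            refine le_sup_right.trans' (le_inf inf_le_left ?_)
            unfold pl
            rw [dm_inf', dm_sup' aᶜ cᶜ, cc', cc']
            exact le_sup_right
          · -- a ⊓ (a ⊓ c)ᶜ ≤ a ⊓ pl a c
            refine le_sup_left.trans' (le_inf inf_le_left ?_)
            unfold pl
            apply le_inf (inf_le_left.trans le_sup_left)
            rw [dm_inf']
            exact inf_le_right
    · exact sup_le inf_le_left inf_le_left
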